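/- arXiv:1507.02484 — 2 statements merged into one kernel-verified Lean document; each statement's English description precedes it below -/
import Mathlib

section
/- Let I_old, I_new : ℝ^M → ℝ with I_new differentiable, let ∇̄I be a discrete gradient of I_new, let S̄ be a skew-symmetric matrix, let û, z ∈ ℝ^M with ⟨∇̄I(û, u^{n+1}), z⟩ ≠ 0. If u^{n+1} = û - ((I_new(û) - I_old(u^n)) / ⟨∇̄I(û,u^{n+1}), z⟩) z + Δt S̄ ∇̄I(û, u^{n+1}), then I_new(u^{n+1}) = I_old(u^n). -/
/-! By the discrete-gradient identity, `I_new(u^{n+1}) - I_new(û)` is the pairing of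
`g = ∇̄I(û, u^{n+1})` with the step `u^{n+1} - û`. Skew-symmetry makes `g ⬝ᵥ S̄ g = 0`, and the
correction along `z` is scaled by `1 / (g ⬝ᵥ z)` precisely so that its pairing with `g` is
`-(I_new(û) - I_old(u^n))`. -/

open Matrix

theorem Matrix.dotProduct_mulVec_self_of_transpose_eq_neg {n R : Type*} [Fintype n] [CommRing R]
    [IsAddTorsionFree R] {S : Matrix n n R} (hS : Sᵀ = -S) (v : n → R) :
    v ⬝ᵥ S *ᵥ v = 0 := by
  refine self_eq_neg.mp ?_
  calc v ⬝ᵥ S *ᵥ v = v ᵥ* S ⬝ᵥ v := dotProduct_mulVec v S v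
    _ = -(v ⬝ᵥ S *ᵥ v) := by
      rw [← mulVec_transpose, hS, neg_mulVec, neg_dotProduct, dotProduct_comm]

theorem Matrix.dotProduct_sub_div_smul_add_smul_sub {n K : Type*} [Fintype n] [Field K]
    {g z w : n → K} (hz : g ⬝ᵥ z ≠ 0) (hw : g ⬝ᵥ w = 0) (u : n → K) (c t : K) :
    g ⬝ᵥ (u - (c / (g ⬝ᵥ z)) • z + t • w - u) = -c := by
  rw [add_sub_right_comm, sub_sub_cancel_left, dotProduct_add, dotProduct_neg, dotProduct_smul,
    dotProduct_smul, hw, smul_eq_mul, smul_eq_mul, div_mul_cancel₀ c hz, mul_zero, add_zero]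

theorem stmt_10_general {M : ℕ} (Iold Inew : (Fin M → ℝ) → ℝ)
    (DG : (Fin M → ℝ) → (Fin M → ℝ) → (Fin M → ℝ))
    (hDG : ∀ v u, DG v u ⬝ᵥ (u - v) = Inew u - Inew v)
    (S : Matrix (Fin M) (Fin M) ℝ) (hS : Sᵀ = -S)
    (Δt : ℝ) (un uhat unext z : Fin M → ℝ)
    (hz : DG uhat unext ⬝ᵥ z ≠ 0)
    (hstep : unext = uhat - ((Inew uhat - Iold un) / (DG uhat unext ⬝ᵥ z)) • z
        + Δt • S.mulVec (DG uhat unext)) :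
    Inew unext = Iold un := by
  have hincr : DG uhat unext ⬝ᵥ (unext - uhat) = -(Inew uhat - Iold un) := by
    have := dotProduct_sub_div_smul_add_smul_sub hz
      (dotProduct_mulVec_self_of_transpose_eq_neg hS _) uhat (Inew uhat - Iold un) Δt
    rwa [← hstep] at this
  linarith [hDG uhat unext]

theorem stmt_10 {M : ℕ} (Iold Inew : (Fin M → ℝ) → ℝ) (hInew : Differentiable ℝ Inew)
    (DG : (Fin M → ℝ) → (Fin M → ℝ) → (Fin M → ℝ))
    (hDG : ∀ v u, DG v u ⬝ᵥ (u - v) = Inew u - Inew v)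
    (S : Matrix (Fin M) (Fin M) ℝ) (hS : Sᵀ = -S)
    (Δt : ℝ) (un uhat unext z : Fin M → ℝ)
    (hz : DG uhat unext ⬝ᵥ z ≠ 0)
    (hstep : unext = uhat - ((Inew uhat - Iold un) / (DG uhat unext ⬝ᵥ z)) • z
        + Δt • S.mulVec (DG uhat unext)) :
    Inew unext = Iold un :=
  stmt_10_general Iold Inew DG hDG S hS Δt un uhat unext z hz hstep
end

section
/- Let I₀ ∈ ℝ, let I : ℝ^M → ℝ be differentiable, let ∇̄I be any discrete gradient of I, let g, z, û ∈ ℝ^M, and Δt ∈ ℝ. Suppose u ∈ ℝ^M and λ ∈ ℝ satisfy the linear projection equations u - û - Δt·g - λz = 0 and I(u) = I₀, and suppose ⟨∇̄I(û,u), z⟩ ≠ 0. Then u satisfies the discrete gradient moving-mesh scheme u = û - ((I(û) - I₀)/⟨∇̄I(û,u), z⟩) z + Δt S ∇̄I(û,u), with S = (g zᵀ - z gᵀ)/⟨∇̄I(û,u), z⟩. -/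
open Matrix

variable {ι 𝕜 : Type*} [Fintype ι]

lemma vecMulVec_sub_vecMulVec_mulVec [CommRing 𝕜] (g z d : ι → 𝕜) :
    (vecMulVec g z - vecMulVec z g) *ᵥ d = (z ⬝ᵥ d) • g - (g ⬝ᵥ d) • z := by
  simp only [sub_mulVec, vecMulVec_mulVec, op_smul_eq_smul]

/-- Eliminating `lam` through the value of `d ⬝ᵥ (u - uhat)` trades the `Δt • g` part of the
step for a skew-symmetric matrix applied to `d`. -/
lemma eq_add_smul_add_smul_skew_mulVec [Field 𝕜] {uhat u g z d : ι → 𝕜} {Δt lam : 𝕜}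
    (hu : u = uhat + Δt • g + lam • z) (hz : d ⬝ᵥ z ≠ 0) :
    u = uhat + (d ⬝ᵥ (u - uhat) / d ⬝ᵥ z) • z
        + Δt • (((d ⬝ᵥ z)⁻¹ • (vecMulVec g z - vecMulVec z g)) *ᵥ d) := by
  subst hu
  have hdot : d ⬝ᵥ (uhat + Δt • g + lam • z - uhat) = Δt * (d ⬝ᵥ g) + lam * (d ⬝ᵥ z) := by
    simp only [add_sub_cancel_left, add_sub_right_comm, dotProduct_add,
      dotProduct_smul, smul_eq_mul]
  rw [hdot, smul_mulVec, vecMulVec_sub_vecMulVec_mulVec, dotProduct_comm z, dotProduct_comm g]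
  ext i
  simp only [Pi.add_apply, Pi.sub_apply, Pi.smul_apply, smul_eq_mul]
  field_simp
  ring

theorem stmt_12_general {M : ℕ} (I₀ : ℝ) (I : (Fin M → ℝ) → ℝ)
    (DG : (Fin M → ℝ) → (Fin M → ℝ) → (Fin M → ℝ))
    (hDG : ∀ v u, DG v u ⬝ᵥ (u - v) = I u - I v)
    (g z uhat u : Fin M → ℝ) (Δt lam : ℝ)
    (heq1 : u - uhat - Δt • g - lam • z = 0)
    (heq2 : I u = I₀)
    (hz : DG uhat u ⬝ᵥ z ≠ 0) :
    u = uhat - ((I uhat - I₀) / (DG uhat u ⬝ᵥ z)) • z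
        + Δt • (((DG uhat u ⬝ᵥ z)⁻¹ • (vecMulVec g z - vecMulVec z g)).mulVec (DG uhat u)) := by
  have hu : u = uhat + Δt • g + lam • z := by
    rw [← sub_eq_zero, ← heq1]
    abel
  have key := eq_add_smul_add_smul_skew_mulVec hu hz
  rwa [hDG, heq2, ← neg_sub, neg_div, neg_smul, ← sub_eq_add_neg] at key

theorem stmt_12 {M : ℕ} (I₀ : ℝ) (I : (Fin M → ℝ) → ℝ) (hI : Differentiable ℝ I)
    (DG : (Fin M → ℝ) → (Fin M → ℝ) → (Fin M → ℝ))
    (hDG : ∀ v u, DG v u ⬝ᵥ (u - v) = I u - I v)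
    (g z uhat u : Fin M → ℝ) (Δt lam : ℝ)
    (heq1 : u - uhat - Δt • g - lam • z = 0)
    (heq2 : I u = I₀)
    (hz : DG uhat u ⬝ᵥ z ≠ 0) :
    u = uhat - ((I uhat - I₀) / (DG uhat u ⬝ᵥ z)) • z
        + Δt • (((DG uhat u ⬝ᵥ z)⁻¹ • (vecMulVec g z - vecMulVec z g)).mulVec (DG uhat u)) :=
  stmt_12_general I₀ I DG hDG g z uhat u Δt lam heq1 heq2 hz
end
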